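/- Gauge transformation of the NLS Lax pair: Let q: ℝ×ℝ → ℂ be a smooth solution of the NLS equation, let λ₀ ∈ ℝ, and let S: ℝ×ℝ → M₂(ℂ) be a smooth, everywhere invertible matrix solution of the NLS Lax pair at (q, λ₀), i.e. ∂_x S = (iλ₀σ₃ + U)S and ∂_t S = −(2iλ₀²σ₃ + 2λ₀U + V)S. Define Γ = S⁻¹ σ₃ S. Then for every λ ∈ ℂ and every smooth solution φ: ℝ×ℝ → ℂ² of the NLS Lax pair at (q, λ), the function ψ = S⁻¹ φ satisfies ∂_x ψ = i(λ − λ₀) Γ ψ and ∂_t ψ = −( 2i(λ² − λ₀²) Γ + (1/2)(λ − λ₀)[Γ, ∂_x Γ] ) ψ. -/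

import Mathlib

open Matrix

noncomputable section

/-- The Pauli matrix `σ₃ = diag(1, −1)`. -/
def sigma3 : Matrix (Fin 2) (Fin 2) ℂ := !![1, 0; 0, -1]

/-- The matrix `U = [[0, iq],[i·conj(q), 0]]` of the NLS Lax pair. -/
def Umat (q : ℝ → ℝ → ℂ) (t x : ℝ) : Matrix (Fin 2) (Fin 2) ℂ :=
  !![0, Complex.I * q t x; Complex.I * (starRingEnd ℂ) (q t x), 0]

/-- The matrix `V = −i|q|²σ₃ + [[0, ∂_x q],[−∂_x conj(q), 0]]` of the NLS Lax pair. -/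
def Vmat (q : ℝ → ℝ → ℂ) (t x : ℝ) : Matrix (Fin 2) (Fin 2) ℂ :=
  (-(Complex.I * (Complex.normSq (q t x) : ℂ))) • sigma3 +
    !![0, deriv (fun y => q t y) x;
       -(deriv (fun y => (starRingEnd ℂ) (q t y)) x), 0]

/-- `φ` solves the NLS Lax pair at `(q, λ)`:
`∂_x φ = (iλσ₃ + U)φ` and `∂_t φ = −(2iλ²σ₃ + 2λU + V)φ`. -/
def NLSLaxSol (q : ℝ → ℝ → ℂ) (lam : ℂ) (φ : ℝ → ℝ → Fin 2 → ℂ) : Prop :=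
  (∀ t x, deriv (fun y => φ t y) x =
    ((Complex.I * lam) • sigma3 + Umat q t x).mulVec (φ t x)) ∧
  (∀ t x, deriv (fun s => φ s x) t =
    (-((2 * Complex.I * lam ^ 2) • sigma3 + (2 * lam) • Umat q t x + Vmat q t x)).mulVec
      (φ t x))

/-- Entrywise spatial derivative of a matrix-valued function. -/
def matDx (A : ℝ → ℝ → Matrix (Fin 2) (Fin 2) ℂ) (t x : ℝ) : Matrix (Fin 2) (Fin 2) ℂ :=
  Matrix.of fun i j => deriv (fun y => A t y i j) x

/-- Entrywise temporal derivative of a matrix-valued function. -/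
def matDt (A : ℝ → ℝ → Matrix (Fin 2) (Fin 2) ℂ) (t x : ℝ) : Matrix (Fin 2) (Fin 2) ℂ :=
  Matrix.of fun i j => deriv (fun s => A s x i j) t

theorem entryMulDeriv (f g : ℝ → Matrix (Fin 2) (Fin 2) ℂ)
    (f' g' : Matrix (Fin 2) (Fin 2) ℂ) (c : ℝ)
    (hf : ∀ i j, HasDerivAt (fun y => f y i j) (f' i j) c)
    (hg : ∀ i j, HasDerivAt (fun y => g y i j) (g' i j) c) :
    ∀ i j, HasDerivAt (fun y => (f y * g y) i j) ((f' * g c + f c * g') i j) c := by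
  intro i j
  have h1 : (fun y => (f y * g y) i j) = fun y => ∑ k, f y i k * g y k j :=
    funext fun y => Matrix.mul_apply
  rw [h1]
  have h2 := HasDerivAt.fun_sum (u := Finset.univ)
    (A := fun k y => f y i k * g y k j)
    (A' := fun k => f' i k * g c k j + f c i k * g' k j)
    (fun k _ => (hf i k).mul (hg k j))
  convert h2 using 1
  · rfl
  simp [Matrix.add_apply, Matrix.mul_apply, Finset.sum_add_distrib]

theorem key_step (S : ℝ → Matrix (Fin 2) (Fin 2) ℂ)
    (hSdiff : ∀ y i j, DifferentiableAt ℝ (fun z => S z i j) y)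
    (hSinv : ∀ y, IsUnit (S y))
    (c : ℝ) (A : Matrix (Fin 2) (Fin 2) ℂ)
    (hdS : ∀ i j, HasDerivAt (fun y => S y i j) ((A * S c) i j) c) :
    ∀ i j, HasDerivAt (fun y => (S y)⁻¹ i j) ((-((S c)⁻¹ * A)) i j) c := by
  have hdet : ∀ y, IsUnit (S y).det := fun y => (Matrix.isUnit_iff_isUnit_det _).mp (hSinv y)
  have hdetne : ∀ y, (S y).det ≠ 0 := fun y => (hdet y).ne_zero
  have hdetdiff : ∀ y, DifferentiableAt ℝ (fun z => (S z).det) y := by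
    intro y
    have h1 : (fun z => (S z).det) = fun z => S z 0 0 * S z 1 1 - S z 0 1 * S z 1 0 :=
      funext fun z => Matrix.det_fin_two _
    rw [h1]
    exact ((hSdiff y 0 0).mul (hSdiff y 1 1)).sub ((hSdiff y 0 1).mul (hSdiff y 1 0))
  have hTdiff : ∀ y i j, DifferentiableAt ℝ (fun z => (S z)⁻¹ i j) y := by
    intro y i j
    have h1 : (fun z => (S z)⁻¹ i j)
        = fun z => ((S z).det)⁻¹ * (!![S z 1 1, -(S z 0 1); -(S z 1 0), S z 0 0] i j) :=
      funext fun z => by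
        rw [Matrix.inv_def, Ring.inverse_eq_inv, Matrix.adjugate_fin_two, Matrix.smul_apply,
          smul_eq_mul]
    rw [h1]
    refine ((hdetdiff y).inv (hdetne y)).mul ?_
    fin_cases i <;> fin_cases j <;> simp <;>
      first
        | exact hSdiff y 1 1
        | exact hSdiff y 0 1
        | exact hSdiff y 1 0
        | exact hSdiff y 0 0
  set T : ℝ → Matrix (Fin 2) (Fin 2) ℂ := fun y => (S y)⁻¹ with hT
  set D : Matrix (Fin 2) (Fin 2) ℂ := Matrix.of (fun i j => deriv (fun y => T y i j) c) with hD
  have hdT : ∀ i j, HasDerivAt (fun y => T y i j) (D i j) c := fun i j =>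
    (hTdiff c i j).hasDerivAt
  have hmul : ∀ i j, HasDerivAt (fun y => (T y * S y) i j)
      ((D * S c + T c * (A * S c)) i j) c := entryMulDeriv T S D (A * S c) c hdT hdS
  have hzero : D * S c + T c * (A * S c) = 0 := by
    ext i j
    have hconst : (fun y => (T y * S y) i j) = fun _ => (1 : Matrix (Fin 2) (Fin 2) ℂ) i j :=
      funext fun y => by rw [hT]; rw [Matrix.nonsing_inv_mul _ (hdet y)]
    have h0 : HasDerivAt (fun y => (T y * S y) i j) 0 c := by
      rw [hconst]; exact hasDerivAt_const _ _
    have := (hmul i j).unique h0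
    simpa using this
  have hDval : D = -(T c * A) := by
    have h1 : D * S c = -(T c * A * S c) := by
      have := hzero
      rw [add_eq_zero_iff_eq_neg] at this
      rw [this, ← Matrix.mul_assoc]
    calc D = D * S c * (S c)⁻¹ := (Matrix.mul_nonsing_inv_cancel_right _ _ (hdet c)).symm
    _ = -(T c * A * S c) * (S c)⁻¹ := by rw [h1]
    _ = -(T c * A) := by
        rw [Matrix.neg_mul, Matrix.mul_nonsing_inv_cancel_right _ _ (hdet c)]
  intro i j
  have := hdT i j
  rwa [hDval] at this

theorem key_vec (S : ℝ → Matrix (Fin 2) (Fin 2) ℂ)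
    (hSdiff : ∀ y i j, DifferentiableAt ℝ (fun z => S z i j) y)
    (hSinv : ∀ y, IsUnit (S y))
    (c : ℝ) (A M : Matrix (Fin 2) (Fin 2) ℂ)
    (hdS : ∀ i j, HasDerivAt (fun y => S y i j) ((A * S c) i j) c)
    (φ : ℝ → Fin 2 → ℂ)
    (hdφ : ∀ i, HasDerivAt (fun y => φ y i) (M.mulVec (φ c) i) c) :
    HasDerivAt (fun y => ((S y)⁻¹).mulVec (φ y)) (((S c)⁻¹ * (M - A)).mulVec (φ c)) c := by
  have hdT := key_step S hSdiff hSinv c A hdS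
  rw [hasDerivAt_pi]
  intro i
  have h1 : (fun y => ((S y)⁻¹).mulVec (φ y) i) = fun y => ∑ j, (S y)⁻¹ i j * φ y j :=
    funext fun y => by simp [Matrix.mulVec, dotProduct]
  rw [h1]
  have h2 := HasDerivAt.fun_sum (u := Finset.univ)
    (A := fun j y => (S y)⁻¹ i j * φ y j)
    (A' := fun j => (-((S c)⁻¹ * A)) i j * φ c j + (S c)⁻¹ i j * M.mulVec (φ c) j)
    (fun j _ => (hdT i j).mul (hdφ j))
  convert h2 using 1
  simp [Matrix.mulVec, dotProduct, Matrix.mul_apply, Matrix.sub_apply, Matrix.neg_apply,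
    Fin.sum_univ_two]
  ring

/-- **Gauge transformation of the NLS Lax pair.**
If `q` solves NLS, `λ₀ ∈ ℝ`, and `S` is a smooth everywhere-invertible matrix solution
of the NLS Lax pair at `(q, λ₀)`, with `Γ = S⁻¹σ₃S`, then for every `λ` and every smooth
solution `φ` of the NLS Lax pair at `(q, λ)`, the function `ψ = S⁻¹φ` satisfies
`∂_x ψ = i(λ−λ₀)Γψ` and `∂_t ψ = −(2i(λ²−λ₀²)Γ + (1/2)(λ−λ₀)[Γ, ∂_xΓ])ψ`. -/
theorem nls_gauge_transformation
    (q : ℝ → ℝ → ℂ) (hq_smooth : ContDiff ℝ (⊤ : ℕ∞) (fun p : ℝ × ℝ => q p.1 p.2))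
    (hq_nls : ∀ t x, Complex.I * deriv (fun s => q s x) t +
      deriv (fun y => deriv (fun z => q t z) y) x +
      2 * (Complex.normSq (q t x) : ℂ) * q t x = 0)
    (lam₀ : ℝ)
    (S : ℝ → ℝ → Matrix (Fin 2) (Fin 2) ℂ)
    (hS_smooth : ∀ i j, ContDiff ℝ (⊤ : ℕ∞) (fun p : ℝ × ℝ => S p.1 p.2 i j))
    (hS_inv : ∀ t x, IsUnit (S t x))
    (hSx : ∀ t x, matDx S t x =
      ((Complex.I * (lam₀ : ℂ)) • sigma3 + Umat q t x) * S t x)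
    (hSt : ∀ t x, matDt S t x =
      -((2 * Complex.I * (lam₀ : ℂ) ^ 2) • sigma3 + (2 * (lam₀ : ℂ)) • Umat q t x +
        Vmat q t x) * S t x)
    (Γ : ℝ → ℝ → Matrix (Fin 2) (Fin 2) ℂ)
    (hΓ : ∀ t x, Γ t x = (S t x)⁻¹ * sigma3 * S t x)
    (lam : ℂ)
    (φ : ℝ → ℝ → Fin 2 → ℂ)
    (hφ_smooth : ContDiff ℝ (⊤ : ℕ∞) (fun p : ℝ × ℝ => φ p.1 p.2))
    (hφ : NLSLaxSol q lam φ) :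
    (∀ t x, deriv (fun y => ((S t y)⁻¹).mulVec (φ t y)) x =
      ((Complex.I * (lam - (lam₀ : ℂ))) • Γ t x).mulVec (((S t x)⁻¹).mulVec (φ t x))) ∧
    (∀ t x, deriv (fun s => ((S s x)⁻¹).mulVec (φ s x)) t =
      (-((2 * Complex.I * (lam ^ 2 - (lam₀ : ℂ) ^ 2)) • Γ t x +
        ((1 / 2 : ℂ) * (lam - (lam₀ : ℂ))) •
          (Γ t x * matDx Γ t x - matDx Γ t x * Γ t x))).mulVec
        (((S t x)⁻¹).mulVec (φ t x))) := by
  have hdet : ∀ t x, IsUnit (S t x).det := fun t x =>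
    (Matrix.isUnit_iff_isUnit_det _).mp (hS_inv t x)
  have hSdiffx : ∀ t y i j, DifferentiableAt ℝ (fun z => S t z i j) y := fun t y i j =>
    (((hS_smooth i j).differentiable (by simp)) (t, y)).comp y
      ((differentiableAt_const t).prodMk differentiableAt_id)
  have hSdifft : ∀ x s i j, DifferentiableAt ℝ (fun z => S z x i j) s := fun x s i j =>
    (((hS_smooth i j).differentiable (by simp)) (s, x)).comp (f := fun z : ℝ => (z, x)) s
      (differentiableAt_id.prodMk (differentiableAt_const x))
  have hφdiffx : ∀ t y, DifferentiableAt ℝ (fun z => φ t z) y := fun t y =>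
    ((hφ_smooth.differentiable (by simp)) (t, y)).comp y
      ((differentiableAt_const t).prodMk differentiableAt_id)
  have hφdifft : ∀ x s, DifferentiableAt ℝ (fun z => φ z x) s := fun x s =>
    ((hφ_smooth.differentiable (by simp)) (s, x)).comp (f := fun z : ℝ => (z, x)) s
      (differentiableAt_id.prodMk (differentiableAt_const x))
  have hdSx : ∀ t x i j, HasDerivAt (fun y => S t y i j)
      ((((Complex.I * (lam₀ : ℂ)) • sigma3 + Umat q t x) * S t x) i j) x := by
    intro t x i j
    have h := (hSdiffx t x i j).hasDerivAt
    have he : deriv (fun y => S t y i j) x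
        = (((Complex.I * (lam₀ : ℂ)) • sigma3 + Umat q t x) * S t x) i j := by
      rw [← hSx t x]; rfl
    rwa [he] at h
  have hdSt : ∀ t x i j, HasDerivAt (fun s => S s x i j)
      ((-((2 * Complex.I * (lam₀ : ℂ) ^ 2) • sigma3 + (2 * (lam₀ : ℂ)) • Umat q t x +
        Vmat q t x) * S t x) i j) t := by
    intro t x i j
    have h := (hSdifft x t i j).hasDerivAt
    have he : deriv (fun s => S s x i j) t
        = (-((2 * Complex.I * (lam₀ : ℂ) ^ 2) • sigma3 + (2 * (lam₀ : ℂ)) • Umat q t x +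
          Vmat q t x) * S t x) i j := by
      rw [← hSt t x]; rfl
    rwa [he] at h
  have hdφx : ∀ t x i, HasDerivAt (fun y => φ t y i)
      ((((Complex.I * lam) • sigma3 + Umat q t x).mulVec (φ t x)) i) x := by
    intro t x
    have h := (hφdiffx t x).hasDerivAt
    rw [hφ.1 t x] at h
    exact hasDerivAt_pi.mp h
  have hdφt : ∀ t x i, HasDerivAt (fun s => φ s x i)
      (((-((2 * Complex.I * lam ^ 2) • sigma3 + (2 * lam) • Umat q t x +
        Vmat q t x)).mulVec (φ t x)) i) t := by
    intro t x
    have h := (hφdifft x t).hasDerivAt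
    rw [hφ.2 t x] at h
    exact hasDerivAt_pi.mp h
  constructor
  · intro t x
    have hkey := key_vec (fun y => S t y) (fun y i j => hSdiffx t y i j) (fun y => hS_inv t y) x
      ((Complex.I * (lam₀ : ℂ)) • sigma3 + Umat q t x)
      ((Complex.I * lam) • sigma3 + Umat q t x)
      (fun i j => hdSx t x i j) (fun y => φ t y) (hdφx t x)
    have hd : deriv (fun y => ((S t y)⁻¹).mulVec (φ t y)) x
        = ((S t x)⁻¹ * (((Complex.I * lam) • sigma3 + Umat q t x)
          - ((Complex.I * (lam₀ : ℂ)) • sigma3 + Umat q t x))).mulVec (φ t x) := hkey.deriv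
    rw [hd, Matrix.mulVec_mulVec]
    congr 1
    rw [hΓ t x, Matrix.smul_mul, Matrix.mul_nonsing_inv_cancel_right _ _ (hdet t x)]
    have h1 : ((Complex.I * lam) • sigma3 + Umat q t x)
        - ((Complex.I * (lam₀ : ℂ)) • sigma3 + Umat q t x)
        = (Complex.I * (lam - (lam₀ : ℂ))) • sigma3 := by module
    rw [h1, Matrix.mul_smul]
  · intro t x
    set A₀ : Matrix (Fin 2) (Fin 2) ℂ := (Complex.I * (lam₀ : ℂ)) • sigma3 + Umat q t x with hA₀
    set B₀ : Matrix (Fin 2) (Fin 2) ℂ := -((2 * Complex.I * (lam₀ : ℂ) ^ 2) • sigma3 +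
      (2 * (lam₀ : ℂ)) • Umat q t x + Vmat q t x) with hB₀
    set Bl : Matrix (Fin 2) (Fin 2) ℂ := -((2 * Complex.I * lam ^ 2) • sigma3 +
      (2 * lam) • Umat q t x + Vmat q t x) with hBl
    set T : Matrix (Fin 2) (Fin 2) ℂ := (S t x)⁻¹ with hTdef
    have hkey := key_vec (fun s => S s x) (fun s i j => hSdifft x s i j)
      (fun s => hS_inv s x) t B₀ Bl
      (fun i j => hdSt t x i j) (fun s => φ s x) (hdφt t x)
    have hd : deriv (fun s => ((S s x)⁻¹).mulVec (φ s x)) t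
        = (T * (Bl - B₀)).mulVec (φ t x) := hkey.deriv
    rw [hd, Matrix.mulVec_mulVec]
    congr 1
    -- compute matDx Γ t x
    have hdTx := key_step (fun y => S t y) (fun y i j => hSdiffx t y i j)
      (fun y => hS_inv t y) x A₀ (fun i j => hdSx t x i j)
    have hd1 : ∀ i j, HasDerivAt (fun y => ((S t y)⁻¹ * sigma3) i j)
        ((-(T * A₀) * sigma3) i j) x := by
      intro i j
      have h := entryMulDeriv (fun y => (S t y)⁻¹) (fun _ => sigma3) (-(T * A₀)) 0 x hdTx
        (fun i j => by simpa using hasDerivAt_const x (sigma3 i j)) i j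
      simpa using h
    have hd2 : ∀ i j, HasDerivAt (fun y => ((S t y)⁻¹ * sigma3 * S t y) i j)
        ((-(T * A₀) * sigma3 * S t x + T * sigma3 * (A₀ * S t x)) i j) x :=
      entryMulDeriv (fun y => (S t y)⁻¹ * sigma3) (fun y => S t y) _ _ x hd1
        (fun i j => hdSx t x i j)
    have hG : matDx Γ t x = -(T * A₀) * sigma3 * S t x + T * sigma3 * (A₀ * S t x) := by
      ext i j
      show deriv (fun y => Γ t y i j) x = _
      have hfun : (fun y => Γ t y i j) = fun y => ((S t y)⁻¹ * sigma3 * S t y) i j :=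
        funext fun y => by rw [hΓ t y]
      rw [hfun]
      exact (hd2 i j).deriv
    -- algebra facts
    have hST0 : S t x * T = 1 := Matrix.mul_nonsing_inv _ (hdet t x)
    have hST : ∀ X : Matrix (Fin 2) (Fin 2) ℂ, S t x * (T * X) = X := fun X => by
      rw [← Matrix.mul_assoc, hST0, Matrix.one_mul]
    have hss : sigma3 * sigma3 = 1 := by
      ext i j
      fin_cases i <;> fin_cases j <;>
        simp [sigma3, Matrix.mul_apply, Fin.sum_univ_two, Matrix.one_apply]
    have hσσ : ∀ X : Matrix (Fin 2) (Fin 2) ℂ, sigma3 * (sigma3 * X) = X := fun X => by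
      rw [← Matrix.mul_assoc, hss, Matrix.one_mul]
    have hUσ : Umat q t x * sigma3 = -(sigma3 * Umat q t x) := by
      ext i j
      fin_cases i <;> fin_cases j <;>
        simp [sigma3, Umat, Matrix.mul_apply, Fin.sum_univ_two]
    have hUσ' : ∀ X : Matrix (Fin 2) (Fin 2) ℂ,
        Umat q t x * (sigma3 * X) = -(sigma3 * (Umat q t x * X)) := fun X => by
      rw [← Matrix.mul_assoc, hUσ, Matrix.neg_mul, Matrix.mul_assoc]
    have hcomm : Γ t x * matDx Γ t x - matDx Γ t x * Γ t x
        = (4 : ℂ) • (T * (Umat q t x * S t x)) := by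
      rw [hG, hΓ t x]
      simp only [← hTdef]
      simp only [hA₀, Matrix.mul_add, Matrix.add_mul, Matrix.mul_sub, Matrix.sub_mul,
        Matrix.neg_mul, Matrix.mul_neg, Matrix.smul_mul, Matrix.mul_smul, Matrix.mul_assoc,
        hST, hσσ, hUσ', hUσ, smul_neg, neg_neg, Matrix.mul_one, hST0]
      module
    rw [hcomm, hΓ t x]
    simp only [hBl, hB₀, Matrix.mul_add, Matrix.add_mul, Matrix.mul_sub, Matrix.sub_mul,
      Matrix.neg_mul, Matrix.mul_neg, Matrix.smul_mul, Matrix.mul_smul, Matrix.mul_assoc,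
      hST, hST0, Matrix.mul_one, smul_neg, neg_neg]
    simp only [← hTdef]
    have hMV : ∀ M N : Matrix (Fin 2) (Fin 2) ℂ, M = N → M *ᵥ φ t x = N *ᵥ φ t x :=
      fun M N h => by rw [h]
    module
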